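/- arXiv:0911.1025 — 3 statements merged into one kernel-verified Lean document; each statement's English description precedes it below -/
import Mathlib

section
/- For all natural numbers n and m, the composition of spread polynomials satisfies Sₙ ∘ Sₘ = S_{nm}, i.e. Sₙ(Sₘ(s)) = S_{nm}(s) as polynomials. -/
open Polynomial

noncomputable def spreadPoly : ℕ → Polynomial ℚ
  | 0 => 0
  | 1 => X
  | (n + 2) => 2 * (1 - 2 * X) * spreadPoly (n + 1) - spreadPoly n + 2 * X

lemma spreadPoly_eq (n : ℕ) :
    2 * spreadPoly n = 1 - (Chebyshev.T ℚ n).comp (1 - 2 * X) := by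
  induction n using Nat.strong_induction_on with
  | _ n ih =>
    match n with
    | 0 => simp [spreadPoly, Polynomial.Chebyshev.T_zero]
    | 1 => simp [spreadPoly, Polynomial.Chebyshev.T_one]
    | (k + 2) =>
      have ih1 := ih (k+1) (by omega)
      have ih0 := ih k (by omega)
      have hT : (Chebyshev.T ℚ ((k:ℤ) + 2)).comp (1 - 2*X) =
          2 * (1 - 2*X) * (Chebyshev.T ℚ ((k:ℤ) + 1)).comp (1 - 2*X)
            - (Chebyshev.T ℚ (k:ℤ)).comp (1 - 2*X) := by
        rw [Polynomial.Chebyshev.T_add_two]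
        simp [sub_comp, mul_comp]
      rw [spreadPoly]
      push_cast
      rw [hT]
      push_cast at ih1
      linear_combination 2 * (1 - 2*X) * ih1 - ih0

theorem spreadPoly_comp (n m : ℕ) :
    (spreadPoly n).comp (spreadPoly m) = spreadPoly (n * m) := by
  have h2 : (2 : Polynomial ℚ) ≠ 0 := by norm_num
  apply mul_left_cancel₀ h2
  set u : Polynomial ℚ := 1 - 2 * X with hu_def
  have hu : u.comp (spreadPoly m) = (Chebyshev.T ℚ m).comp u := by
    rw [hu_def]
    simp only [sub_comp, one_comp, mul_comp, X_comp, ofNat_comp]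
    linear_combination - spreadPoly_eq m
  calc 2 * (spreadPoly n).comp (spreadPoly m)
      = (2 * spreadPoly n).comp (spreadPoly m) := by
        simp [mul_comp]
    _ = (1 - (Chebyshev.T ℚ n).comp u).comp (spreadPoly m) := by
        rw [spreadPoly_eq]
    _ = 1 - (Chebyshev.T ℚ n).comp (u.comp (spreadPoly m)) := by
        rw [sub_comp, one_comp, comp_assoc]
    _ = 1 - (Chebyshev.T ℚ ((n*m : ℕ) : ℤ)).comp u := by
        rw [hu, ← comp_assoc, ← Polynomial.Chebyshev.T_mul]
        push_cast; ring_nf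
    _ = 2 * spreadPoly (n * m) := (spreadPoly_eq _).symm
end

section
/- Spread of a power: Let F be a field of characteristic ≠ 2 containing r with r² = -k ≠ 0, and let a, b ∈ F with a² + kb² ≠ 0. Set A = a+br, B = a-br, s = kb²/(a²+kb²), and tₙ = -(Aⁿ - Bⁿ)²/(4AⁿBⁿ). Then t₀ = 0, t₁ = s, and tₙ = 2(1-2s)tₙ₋₁ - tₙ₋₂ + 2s for all n ≥ 2; hence tₙ = Sₙ(s) where Sₙ is the n-th spread polynomial. -/
def spread {F : Type*} [Field F] : ℕ → F → F
  | 0, _ => 0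
  | 1, s => s
  | (n + 2), s => 2 * (1 - 2 * s) * spread (n + 1) s - spread n s + 2 * s

/-!
With `x = A / B` we have `-(Aⁿ - Bⁿ)² / (4 AⁿBⁿ) = (2 - (xⁿ + x⁻ⁿ)) / 4`, and `xⁿ + x⁻ⁿ` is the
Dickson polynomial `Dₙ(·, 1)` evaluated at `x + x⁻¹`. The spread polynomials are Dickson
polynomials after an affine change of variables, `Sₙ(s) = (2 - Dₙ(2 - 4s, 1)) / 4`, and the
case `n = 1` identifies `s` with `(2 - (x + x⁻¹)) / 4`.
-/

open Polynomial

theorem spread_eq_two_sub_dickson_div_four {F : Type*} [Field F] (h4 : (4 : F) ≠ 0)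
    (n : ℕ) (s : F) : spread n s = (2 - (dickson 1 (1 : F) n).eval (2 - 4 * s)) / 4 := by
  induction n using Nat.twoStepInduction with
  | zero => norm_num [spread, dickson_zero]
  | one => rw [spread, dickson_one, eval_X]; field_simp; ring
  | more n ih ih' =>
    rw [spread, ih, ih', dickson_add_two]
    simp only [eval_sub, eval_mul, eval_X, eval_C, one_mul]
    field_simp
    ring

theorem neg_sq_sub_div_four_mul {F : Type*} [Field F] {X Y : F} (hX : X ≠ 0) (hY : Y ≠ 0) :
    -(X - Y) ^ 2 / (4 * X * Y) = (2 - (X / Y + Y / X)) / 4 := by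
  field_simp
  ring

theorem spread_neg_sq_sub_pow_div {F : Type*} [Field F] (h4 : (4 : F) ≠ 0) {A B : F}
    (hA : A ≠ 0) (hB : B ≠ 0) (n : ℕ) :
    -(A ^ n - B ^ n) ^ 2 / (4 * A ^ n * B ^ n) = spread n (-(A - B) ^ 2 / (4 * A * B)) := by
  have hinv : A / B * (B / A) = 1 := by field_simp
  have harg : 2 - 4 * ((2 - (A / B + B / A)) / 4) = A / B + B / A := by field_simp; ring
  rw [spread_eq_two_sub_dickson_div_four h4, neg_sq_sub_div_four_mul hA hB, harg,
    dickson_one_one_eval_add_inv _ _ hinv, div_pow, div_pow,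
    neg_sq_sub_div_four_mul (pow_ne_zero n hA) (pow_ne_zero n hB)]

theorem spread_of_power_general {F : Type*} [Field F] (hchar : (2 : F) ≠ 0)
    (k r a b : F) (hr : r ^ 2 = -k)
    (hnn : a ^ 2 + k * b ^ 2 ≠ 0) :
    let A := a + b * r
    let B := a - b * r
    let s := k * b ^ 2 / (a ^ 2 + k * b ^ 2)
    let t : ℕ → F := fun n => -(A ^ n - B ^ n) ^ 2 / (4 * A ^ n * B ^ n)
    t 0 = 0 ∧ t 1 = s ∧
    (∀ n : ℕ, 2 ≤ n → t n = 2 * (1 - 2 * s) * t (n - 1) - t (n - 2) + 2 * s) ∧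
    (∀ n : ℕ, t n = spread n s) := by
  intro A B s t
  have hAB : A * B = a ^ 2 + k * b ^ 2 := by linear_combination (-b ^ 2) * hr
  have hA : A ≠ 0 := left_ne_zero_of_mul (hAB ▸ hnn)
  have hB : B ≠ 0 := right_ne_zero_of_mul (hAB ▸ hnn)
  have h4 : (4 : F) ≠ 0 := by
    rw [show (4 : F) = 2 * 2 by norm_num]; exact mul_ne_zero hchar hchar
  have hs : s = -(A - B) ^ 2 / (4 * A * B) := by
    rw [mul_assoc, hAB, div_eq_div_iff hnn (mul_ne_zero h4 hnn)]
    linear_combination (4 * b ^ 2 * (a ^ 2 + k * b ^ 2)) * hr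
  have ht : ∀ n, t n = spread n s := fun n => hs ▸ spread_neg_sq_sub_pow_div h4 hA hB n
  refine ⟨ht 0, ht 1, fun n hn => ?_, ht⟩
  obtain ⟨m, rfl⟩ := Nat.exists_eq_add_of_le' hn
  simp only [ht, Nat.add_sub_cancel]
  rfl

theorem spread_of_power {F : Type*} [Field F] (hchar : (2 : F) ≠ 0)
    (k r a b : F) (hk : k ≠ 0) (hr : r ^ 2 = -k)
    (hnn : a ^ 2 + k * b ^ 2 ≠ 0) :
    let A := a + b * r
    let B := a - b * r
    let s := k * b ^ 2 / (a ^ 2 + k * b ^ 2)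
    let t : ℕ → F := fun n => -(A ^ n - B ^ n) ^ 2 / (4 * A ^ n * B ^ n)
    t 0 = 0 ∧ t 1 = s ∧
    (∀ n : ℕ, 2 ≤ n → t n = 2 * (1 - 2 * s) * t (n - 1) - t (n - 2) + 2 * s) ∧
    (∀ n : ℕ, t n = spread n s) :=
  spread_of_power_general hchar k r a b hr hnn
end

section
/- Spread periodicity: Fix an odd prime p and s ∈ 𝔽ₚ. There exists a positive integer m dividing p-1 or p+1 such that for all n ∈ ℕ, Sₙ(s) = 0 in 𝔽ₚ if and only if m divides n. -/
section
variable {K : Type*} [Field K]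

theorem map_spread {L : Type*} [Field L] (f : K →+* L) (n : ℕ) (s : K) :
    f (spread n s) = spread n (f s) := by
  fun_induction spread n s with
  | case1 => simp [spread]
  | case2 => simp [spread]
  | case3 n s ih1 ih0 => simp [spread, ih1, ih0, map_ofNat]

theorem ne_zero_of_sq_eq_two_mul_mul_sub_one {c x : K} (hx : x ^ 2 = 2 * c * x - 1) : x ≠ 0 := by
  rintro rfl
  simp at hx

theorem spread_mul_four_mul_pow {s x : K} (hx : x ^ 2 = 2 * (1 - 2 * s) * x - 1) (n : ℕ) :
    spread n s * (4 * x ^ n) = -(x ^ n - 1) ^ 2 := by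
  fun_induction spread n s with
  | case1 => simp
  | case2 => linear_combination hx
  | case3 n s ih1 ih0 =>
    simp only [Nat.succ_eq_add_one]
    linear_combination
      2 * (1 - 2 * s) * x * ih1 hx - x ^ 2 * ih0 hx + ((x ^ (n + 1)) ^ 2 + 1) * hx

theorem spread_eq_zero_iff_pow_eq_one (h2 : (2 : K) ≠ 0) {s x : K}
    (hx : x ^ 2 = 2 * (1 - 2 * s) * x - 1) (n : ℕ) : spread n s = 0 ↔ x ^ n = 1 := by
  have hx0 := ne_zero_of_sq_eq_two_mul_mul_sub_one hx
  have h4 : (4 : K) * x ^ n ≠ 0 := by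
    rw [show (4 : K) = 2 ^ 2 by norm_num]
    exact mul_ne_zero (pow_ne_zero 2 h2) (pow_ne_zero n hx0)
  rw [← mul_left_inj' h4, spread_mul_four_mul_pow hx, zero_mul, neg_eq_zero, sq_eq_zero_iff,
    sub_eq_zero]

theorem exists_sq_eq_two_mul_mul_sub_one [IsAlgClosed K] (c : K) :
    ∃ x : K, x ^ 2 = 2 * c * x - 1 := by
  obtain ⟨r, hr⟩ := IsAlgClosed.exists_eq_mul_self (c ^ 2 - 1)
  exact ⟨c + r, by linear_combination -hr⟩

theorem eq_or_mul_eq_one_of_sq_eq_two_mul_mul_sub_one {c x y : K}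
    (hx : x ^ 2 = 2 * c * x - 1) (hy : y ^ 2 = 2 * c * y - 1) : y = x ∨ x * y = 1 := by
  have : (y - x) * (y + x - 2 * c) = 0 := by linear_combination hy - hx
  rcases mul_eq_zero.mp this with h | h
  · exact .inl (sub_eq_zero.mp h)
  · exact .inr (by linear_combination x * h - hx)

theorem pow_sub_one_eq_one_or_pow_add_one_eq_one (p : ℕ) [Fact p.Prime] [CharP K p] {c x : K}
    (hc : c ^ p = c) (hx : x ^ 2 = 2 * c * x - 1) : x ^ (p - 1) = 1 ∨ x ^ (p + 1) = 1 := by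
  have hxp : (x ^ p) ^ 2 = 2 * c * x ^ p - 1 := by
    have h := congrArg (frobenius K p) hx
    rw [map_pow, map_sub, map_one, map_mul, map_mul, map_ofNat] at h
    simpa only [frobenius_def, hc] using h
  rcases eq_or_mul_eq_one_of_sq_eq_two_mul_mul_sub_one hx hxp with h | h
  · left
    refine mul_left_cancel₀ (ne_zero_of_sq_eq_two_mul_mul_sub_one hx) ?_
    rw [← pow_succ', Nat.sub_add_cancel (Fact.out : p.Prime).one_le, h, mul_one]
  · right
    rwa [pow_succ']

end

theorem spread_periodicity_general (p : ℕ) (hodd : p ≠ 2)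
    [Fact p.Prime] (s : ZMod p) :
    ∃ m : ℕ, 0 < m ∧ (m ∣ p - 1 ∨ m ∣ p + 1) ∧
      ∀ n : ℕ, spread n s = 0 ↔ m ∣ n := by
  let φ := algebraMap (ZMod p) (AlgebraicClosure (ZMod p))
  obtain ⟨x, hx⟩ := exists_sq_eq_two_mul_mul_sub_one (φ (1 - 2 * s))
  have h2 : (2 : AlgebraicClosure (ZMod p)) ≠ 0 := by
    rw [← map_ofNat φ, map_ne_zero]
    exact Ring.two_ne_zero (by rwa [ZMod.ringChar_zmod_n])
  have hzero (n : ℕ) : spread n s = 0 ↔ x ^ n = 1 := by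
    rw [← map_eq_zero_iff φ φ.injective, map_spread,
      spread_eq_zero_iff_pow_eq_one h2 (by rwa [map_sub, map_one, map_mul, map_ofNat] at hx)]
  have hdvd : orderOf x ∣ p - 1 ∨ orderOf x ∣ p + 1 :=
    (pow_sub_one_eq_one_or_pow_add_one_eq_one p (by rw [← map_pow, ZMod.pow_card]) hx).imp
      orderOf_dvd_of_pow_eq_one orderOf_dvd_of_pow_eq_one
  have hp := (Fact.out : p.Prime).two_le
  refine ⟨orderOf x, ?_, hdvd, fun n => (hzero n).trans orderOf_dvd_iff_pow_eq_one.symm⟩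
  rcases hdvd with h | h <;> exact Nat.pos_of_dvd_of_pos h (by omega)

theorem spread_periodicity (p : ℕ) (hp : p.Prime) (hodd : p ≠ 2)
    [Fact p.Prime] (s : ZMod p) :
    ∃ m : ℕ, 0 < m ∧ (m ∣ p - 1 ∨ m ∣ p + 1) ∧
      ∀ n : ℕ, spread n s = 0 ↔ m ∣ n :=
  spread_periodicity_general p hodd s
end
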